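/- For every x in a measurable set Ω ⊂ ℝ² of finite measure, a standard planar Brownian motion started at x satisfies ℙ(∃ t ∈ [0, |Ω|/8] : ω_x(t) ∉ Ω) ≥ ℙ(ω_x(|Ω|/8) ∉ Ω) ≥ e^{−2/π} > 1/2. -/

import Mathlib

open Real MeasureTheory Set Metric ENNReal

/-!
The law of `ω_x(T/8)`, `T = |Ω|`, has a density that is a decreasing function of the distance
to `x`. By the bathtub principle, among measurable sets of area `T` the disc `B(x, √(T/π))` has
the largest mass, so `Ωᶜ` has at least the mass of the complement of that disc, which polar
coordinates evaluate to `e^{-2/π}`.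
-/

theorem intervalIntegral_mul_exp_neg_mul_sq {a : ℝ} (ha : a ≠ 0) (r : ℝ) :
    ∫ y in (0 : ℝ)..r, y * exp (-(a * y ^ 2)) = (1 - exp (-(a * r ^ 2))) / (2 * a) := by
  have hderiv : ∀ y : ℝ, HasDerivAt (fun y => -exp (-(a * y ^ 2)) / (2 * a))
      (y * exp (-(a * y ^ 2))) y := fun y => by
    have hexponent : HasDerivAt (fun y => -(a * y ^ 2)) (-(a * (2 * y))) y :=
      ((hasDerivAt_pow 2 y).const_mul a).neg.congr_deriv (by ring)
    refine (hexponent.exp.neg.div_const (2 * a)).congr_deriv ?_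
    field_simp
  rw [intervalIntegral.integral_eq_sub_of_hasDerivAt (fun y _ => hderiv y)
    (by apply Continuous.intervalIntegrable; fun_prop)]
  simp only [ne_eq, OfNat.ofNat_ne_zero, not_false_eq_true, zero_pow, mul_zero, neg_zero,
    exp_zero]
  ring

theorem integral_ball_exp_neg_mul_norm_sq {a r : ℝ} (ha : a ≠ 0) (hr : 0 ≤ r)
    (x : EuclideanSpace ℝ (Fin 2)) :
    ∫ y in ball x r, exp (-(a * ‖x - y‖ ^ 2)) = π / a * (1 - exp (-(a * r ^ 2))) := by
  set F : ℝ → ℝ := (Iio r).indicator fun s => exp (-(a * s ^ 2))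
  have hvol : volume.real (ball (0 : EuclideanSpace ℝ (Fin 2)) 1) = π := by
    simp [Measure.real, pi_pos.le]
  calc ∫ y in ball x r, exp (-(a * ‖x - y‖ ^ 2))
      = ∫ y : EuclideanSpace ℝ (Fin 2), F ‖y - x‖ := by
        rw [← integral_indicator measurableSet_ball]
        congr 1 with y
        classical
        simp only [F, indicator_apply, mem_ball, dist_eq_norm', mem_Iio, norm_sub_rev x y]
    _ = ∫ y : EuclideanSpace ℝ (Fin 2), F ‖y‖ := integral_sub_right_eq_self (fun z => F ‖z‖) x
    _ = 2 * π * ∫ s in (0 : ℝ)..r, s * exp (-(a * s ^ 2)) := by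
        rw [integral_fun_norm_addHaar volume F, finrank_euclideanSpace, Fintype.card_fin, hvol,
          intervalIntegral.integral_of_le hr, integral_Ioc_eq_integral_Ioo, ← Ioi_inter_Iio,
          ← setIntegral_indicator measurableSet_Iio]
        simp only [F, indicator_apply, mem_Iio]
        simp [mul_assoc]
    _ = π / a * (1 - exp (-(a * r ^ 2))) := by
        rw [intervalIntegral_mul_exp_neg_mul_sq ha]
        field_simp

theorem withDensity_compl_le_compl_of_superlevel {α : Type*} [MeasurableSpace α]
    {ν : Measure α} {f : α → ℝ≥0∞} {B Ω : Set α} {m : ℝ≥0∞}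
    (hB : MeasurableSet B) (hΩ : MeasurableSet Ω) (hvol : ν B = ν Ω) (hfin : ν Ω ≠ ∞)
    (hge : ∀ y ∈ B, m ≤ f y) (hle : ∀ y ∉ B, f y ≤ m) :
    ν.withDensity f Bᶜ ≤ ν.withDensity f Ωᶜ := by
  have hsymm : ν (Bᶜ ∩ Ω) = ν (Ωᶜ ∩ B) := by
    simpa only [Set.sdiff_eq, inter_comm] using
      measure_sdiff_symm hΩ.nullMeasurableSet hB.nullMeasurableSet hvol.symm
        (measure_ne_top_of_subset inter_subset_left hfin)
  have hout : ν.withDensity f (Bᶜ ∩ Ω) ≤ ν.withDensity f (Ωᶜ ∩ B) :=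
    calc ν.withDensity f (Bᶜ ∩ Ω)
        ≤ ∫⁻ _ in Bᶜ ∩ Ω, m ∂ν := by
          rw [withDensity_apply _ (hB.compl.inter hΩ)]
          exact setLIntegral_mono' (hB.compl.inter hΩ) fun y hy => hle y hy.1
      _ = ∫⁻ _ in Ωᶜ ∩ B, m ∂ν := by rw [setLIntegral_const, setLIntegral_const, hsymm]
      _ ≤ ν.withDensity f (Ωᶜ ∩ B) := by
          rw [withDensity_apply _ (hΩ.compl.inter hB)]
          exact setLIntegral_mono' (hΩ.compl.inter hB) fun y hy => hge y hy.2
  calc ν.withDensity f Bᶜ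
      = ν.withDensity f (Bᶜ ∩ Ω) + ν.withDensity f (Bᶜ \ Ω) :=
        (measure_inter_add_sdiff _ hΩ).symm
    _ ≤ ν.withDensity f (Ωᶜ ∩ B) + ν.withDensity f (Ωᶜ \ B) := by
        rw [show Ωᶜ \ B = Bᶜ \ Ω by ext; simp [and_comm]]
        gcongr
    _ = ν.withDensity f Ωᶜ := measure_inter_add_sdiff _ hB

theorem volume_ball_sqrt_div_pi (x : EuclideanSpace ℝ (Fin 2)) {T : ℝ} (hT : 0 ≤ T) :
    volume (ball x √(T / π)) = ENNReal.ofReal T := by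
  rw [EuclideanSpace.volume_ball_fin_two, ← ENNReal.ofReal_pow (sqrt_nonneg _),
    sq_sqrt (by positivity), ← ENNReal.ofReal_mul (by positivity), div_mul_cancel₀ _ pi_ne_zero]

theorem one_half_lt_exp_neg_two_div_pi : 1 / 2 < exp (-(2 / π)) := by
  rw [← exp_log (by norm_num : (0 : ℝ) < 1 / 2), exp_lt_exp, one_div, Real.log_inv,
    neg_lt_neg_iff, div_lt_iff₀ pi_pos]
  nlinarith [log_two_gt_d9, pi_gt_d6]

/-- The density of `ω_x(T / 8)`: the Gaussian with mean `x` and covariance `(T / 4) • 1`. -/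
noncomputable def brownianDensity (T : ℝ) (x y : EuclideanSpace ℝ (Fin 2)) : ℝ :=
  2 / (π * T) * exp (-(2 * ‖x - y‖ ^ 2 / T))

section brownianDensity

variable {T : ℝ} (x : EuclideanSpace ℝ (Fin 2))

theorem withDensity_brownianDensity_ball (hT : 0 < T) {r : ℝ} (hr : 0 ≤ r) :
    volume.withDensity (fun y => ENNReal.ofReal (brownianDensity T x y)) (ball x r) =
      ENNReal.ofReal (1 - exp (-(2 * r ^ 2 / T))) := by
  have hcont : Continuous (brownianDensity T x) := by unfold brownianDensity; fun_prop
  rw [withDensity_apply _ measurableSet_ball, ← ofReal_integral_eq_lintegral_ofReal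
    ((hcont.continuousOn.integrableOn_compact (isCompact_closedBall x r)).mono_set
      ball_subset_closedBall)
    (ae_of_all _ fun y => by unfold brownianDensity; positivity)]
  congr 1
  have hexp : ∀ y, exp (-(2 * ‖x - y‖ ^ 2 / T)) = exp (-(2 / T * ‖x - y‖ ^ 2)) := fun y => by
    ring_nf
  simp only [brownianDensity, hexp, integral_const_mul,
    integral_ball_exp_neg_mul_norm_sq (by positivity : 2 / T ≠ 0) hr]
  field_simp

theorem withDensity_brownianDensity_compl_ball_le (hT : 0 ≤ T) {r : ℝ} (hr : 0 ≤ r)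
    {Ω : Set (EuclideanSpace ℝ (Fin 2))} (hΩ : MeasurableSet Ω)
    (hvol : volume (ball x r) = volume Ω) (hfin : volume Ω ≠ ∞) :
    volume.withDensity (fun y => ENNReal.ofReal (brownianDensity T x y)) (ball x r)ᶜ ≤
      volume.withDensity (fun y => ENNReal.ofReal (brownianDensity T x y)) Ωᶜ := by
  refine withDensity_compl_le_compl_of_superlevel measurableSet_ball hΩ hvol hfin
    (m := ENNReal.ofReal (2 / (π * T) * exp (-(2 * r ^ 2 / T))))
    (fun y hy => ENNReal.ofReal_le_ofReal ?_) (fun y hy => ENNReal.ofReal_le_ofReal ?_)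
  · rw [mem_ball, dist_eq_norm'] at hy
    unfold brownianDensity
    gcongr
  · rw [mem_ball, dist_eq_norm', not_lt] at hy
    unfold brownianDensity
    gcongr

end brownianDensity

theorem stmt17 {W : Type*} [MeasurableSpace W] (P : Measure W) [IsProbabilityMeasure P]
    (Ω : Set (EuclideanSpace ℝ (Fin 2))) (hm : MeasurableSet Ω)
    (h0 : 0 < volume Ω) (hfin : volume Ω < ⊤)
    (x : EuclideanSpace ℝ (Fin 2)) (X : ℝ → W → EuclideanSpace ℝ (Fin 2))
    (hX : Measurable (X ((volume Ω).toReal / 8)))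
    (hlaw : P.map (X ((volume Ω).toReal / 8)) =
      volume.withDensity fun y =>
        ENNReal.ofReal
          ((2 / (π * (volume Ω).toReal)) *
            Real.exp (-(2 * ‖x - y‖ ^ 2 / (volume Ω).toReal)))) :
    P {w | ∃ t ∈ Set.Icc (0 : ℝ) ((volume Ω).toReal / 8), X t w ∉ Ω} ≥
        P {w | X ((volume Ω).toReal / 8) w ∉ Ω} ∧
    P {w | X ((volume Ω).toReal / 8) w ∉ Ω} ≥ ENNReal.ofReal (Real.exp (-(2 / π))) ∧
    Real.exp (-(2 / π)) > 1 / 2 := by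
  set T := (volume Ω).toReal
  have hT : 0 < T := ENNReal.toReal_pos h0.ne' hfin.ne
  change P.map (X (T / 8)) = volume.withDensity fun y => ENNReal.ofReal (brownianDensity T x y)
    at hlaw
  set r := √(T / π)
  have hr : 0 ≤ r := sqrt_nonneg _
  have : IsProbabilityMeasure (P.map (X (T / 8))) :=
    Measure.isProbabilityMeasure_map hX.aemeasurable
  have hball : P.map (X (T / 8)) (ball x r) = ENNReal.ofReal (1 - exp (-(2 / π))) := by
    rw [hlaw, withDensity_brownianDensity_ball x hT hr, sq_sqrt (by positivity)]
    field_simp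
  refine ⟨measure_mono fun w hw => ⟨T / 8, ⟨by positivity, le_rfl⟩, hw⟩, ?_,
    one_half_lt_exp_neg_two_div_pi⟩
  calc P {w | X (T / 8) w ∉ Ω}
      = P.map (X (T / 8)) Ωᶜ := (Measure.map_apply hX hm.compl).symm
    _ ≥ P.map (X (T / 8)) (ball x r)ᶜ := by
        rw [hlaw]
        refine withDensity_brownianDensity_compl_ball_le x hT.le hr hm ?_ hfin.ne
        rw [volume_ball_sqrt_div_pi x hT.le, ofReal_toReal hfin.ne]
    _ = ENNReal.ofReal (exp (-(2 / π))) := by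
        rw [prob_compl_eq_one_sub measurableSet_ball, hball, ← ENNReal.ofReal_one,
          ← ENNReal.ofReal_sub _ (sub_nonneg.2 (exp_le_one_iff.2 (neg_nonpos.2 (by positivity)))),
          _root_.sub_sub_cancel]
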